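/- Let A be a bounded operator on a complex Hilbert space H with ker A ⊆ ker A*, let g ∈ ran A, and suppose f₀ is a Krylov solution of Af = g, i.e., f₀ lies in the closure of K(A,g) and A f₀ = g. Then f₀ is orthogonal to ker A, every solution f of Af = g has the form f = f₀ + ψ with ψ ∈ ker A, and ‖f‖² = ‖f₀‖² + ‖ψ‖²; consequently f₀ has minimal norm among all solutions of Af = g. -/

import Mathlib

/-! The Krylov vectors `A^k g` all lie in `ran A ⊆ (ker A*)ᗮ ⊆ (ker A)ᗮ`, and the last space is
closed, so it contains the closure of the Krylov subspace and hence `f₀`. Any other solution differs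
from `f₀` by an element of `ker A`, and Pythagoras gives the norm identity and minimality. -/

section Krylov

variable {R M : Type*} [Semiring R] [AddCommMonoid M] [TopologicalSpace M] [Module R M]

abbrev krylovSubspace (A : M →L[R] M) (g : M) : Submodule R M :=
  Submodule.span R (Set.range fun k : ℕ => (A ^ k) g)

theorem krylovSubspace_le_range {A : M →L[R] M} {g : M}
    (hg : g ∈ LinearMap.range (A : M →ₗ[R] M)) :
    krylovSubspace A g ≤ LinearMap.range (A : M →ₗ[R] M) := by
  rw [Submodule.span_le]
  rintro _ ⟨k | k, rfl⟩
  · simpa using hg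
  · exact ⟨(A ^ k) g, by simp only [pow_succ']; rfl⟩

variable {𝕜 E : Type*} [RCLike 𝕜] [NormedAddCommGroup E] [InnerProductSpace 𝕜 E] [CompleteSpace E]

theorem topologicalClosure_krylovSubspace_le_orthogonal_ker {A : E →L[𝕜] E}
    (hker : LinearMap.ker (A : E →ₗ[𝕜] E) ≤
      LinearMap.ker (ContinuousLinearMap.adjoint A : E →ₗ[𝕜] E))
    {g : E} (hg : g ∈ LinearMap.range (A : E →ₗ[𝕜] E)) :
    (krylovSubspace A g).topologicalClosure ≤ (LinearMap.ker (A : E →ₗ[𝕜] E))ᗮ := by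
  have hrange : LinearMap.range (A : E →ₗ[𝕜] E) ≤ (LinearMap.ker (A : E →ₗ[𝕜] E))ᗮ :=
    calc LinearMap.range (A : E →ₗ[𝕜] E)
        ≤ (LinearMap.range (A : E →ₗ[𝕜] E))ᗮᗮ := Submodule.le_orthogonal_orthogonal _
      _ = (LinearMap.ker (ContinuousLinearMap.adjoint A : E →ₗ[𝕜] E))ᗮ := by
          rw [A.orthogonal_range]
      _ ≤ (LinearMap.ker (A : E →ₗ[𝕜] E))ᗮ := Submodule.orthogonal_le hker
  exact Submodule.topologicalClosure_minimal _ ((krylovSubspace_le_range hg).trans hrange)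
    (Submodule.isClosed_orthogonal _)

end Krylov

theorem norm_sq_eq_norm_sq_add_norm_sub_sq_of_mem_orthogonal {𝕜 E : Type*} [RCLike 𝕜]
    [NormedAddCommGroup E] [InnerProductSpace 𝕜 E] {K : Submodule 𝕜 E} {f₀ f : E}
    (hf₀ : f₀ ∈ Kᗮ) (hf : f - f₀ ∈ K) :
    ‖f‖ ^ 2 = ‖f₀‖ ^ 2 + ‖f - f₀‖ ^ 2 := by
  have h := norm_add_sq_eq_norm_sq_add_norm_sq_of_inner_eq_zero f₀ (f - f₀)
    (Submodule.inner_left_of_mem_orthogonal hf hf₀)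
  rw [add_sub_cancel] at h
  simpa only [sq] using h

theorem krylov_solution_minimal_norm_general
    {H : Type*} [NormedAddCommGroup H] [InnerProductSpace ℂ H] [CompleteSpace H]
    (A : H →L[ℂ] H)
    (hker : LinearMap.ker (A : H →ₗ[ℂ] H) ≤ LinearMap.ker (ContinuousLinearMap.adjoint A : H →ₗ[ℂ] H))
    (g : H) (f₀ : H)
    (hf₀mem : f₀ ∈ (Submodule.span ℂ (Set.range fun k : ℕ => (A ^ k) g)).topologicalClosure)
    (hf₀sol : A f₀ = g) :
    (∀ ψ ∈ LinearMap.ker (A : H →ₗ[ℂ] H), @inner ℂ _ _ f₀ ψ = 0) ∧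
    (∀ f : H, A f = g →
      f - f₀ ∈ LinearMap.ker (A : H →ₗ[ℂ] H) ∧ f = f₀ + (f - f₀) ∧ ‖f‖ ^ 2 = ‖f₀‖ ^ 2 + ‖f - f₀‖ ^ 2) ∧
    (∀ f : H, A f = g → ‖f₀‖ ≤ ‖f‖) := by
  have horth : f₀ ∈ (LinearMap.ker (A : H →ₗ[ℂ] H))ᗮ :=
    topologicalClosure_krylovSubspace_le_orthogonal_ker hker ⟨f₀, hf₀sol⟩ hf₀mem
  have hdiff : ∀ f : H, A f = g → f - f₀ ∈ LinearMap.ker (A : H →ₗ[ℂ] H) := fun f hf => by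
    simp [hf, hf₀sol]
  have hpyth : ∀ f : H, A f = g → ‖f‖ ^ 2 = ‖f₀‖ ^ 2 + ‖f - f₀‖ ^ 2 := fun f hf =>
    norm_sq_eq_norm_sq_add_norm_sub_sq_of_mem_orthogonal horth (hdiff f hf)
  refine ⟨(Submodule.mem_orthogonal' _ _).mp horth,
    fun f hf => ⟨hdiff f hf, (add_sub_cancel f₀ f).symm, hpyth f hf⟩, fun f hf => ?_⟩
  have hsq : ‖f₀‖ ^ 2 ≤ ‖f‖ ^ 2 := by
    rw [hpyth f hf]
    exact le_add_of_nonneg_right (sq_nonneg _)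
  exact pow_le_pow_iff_left₀ (norm_nonneg _) (norm_nonneg _) two_ne_zero |>.mp hsq

/-- Let `A` be a bounded operator on a complex Hilbert space with
`ker A ⊆ ker A*`, let `g ∈ ran A`, and let `f₀` be a Krylov solution of `A f = g`, i.e.
`f₀` lies in the closure of `K(A,g) = span{A^k g : k ∈ ℕ}` and `A f₀ = g`.  Then `f₀` is
orthogonal to `ker A`; every solution `f` of `A f = g` has the form `f = f₀ + ψ` with
`ψ = f - f₀ ∈ ker A` and `‖f‖² = ‖f₀‖² + ‖ψ‖²`; consequently `f₀` has minimal norm among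
all solutions. -/
theorem krylov_solution_minimal_norm
    {H : Type*} [NormedAddCommGroup H] [InnerProductSpace ℂ H] [CompleteSpace H]
    (A : H →L[ℂ] H)
    (hker : LinearMap.ker (A : H →ₗ[ℂ] H) ≤ LinearMap.ker (ContinuousLinearMap.adjoint A : H →ₗ[ℂ] H))
    (g : H) (hg : g ∈ LinearMap.range (A : H →ₗ[ℂ] H)) (f₀ : H)
    (hf₀mem : f₀ ∈ (Submodule.span ℂ (Set.range fun k : ℕ => (A ^ k) g)).topologicalClosure)
    (hf₀sol : A f₀ = g) :
    (∀ ψ ∈ LinearMap.ker (A : H →ₗ[ℂ] H), @inner ℂ _ _ f₀ ψ = 0) ∧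
    (∀ f : H, A f = g →
      f - f₀ ∈ LinearMap.ker (A : H →ₗ[ℂ] H) ∧ f = f₀ + (f - f₀) ∧ ‖f‖ ^ 2 = ‖f₀‖ ^ 2 + ‖f - f₀‖ ^ 2) ∧
    (∀ f : H, A f = g → ‖f₀‖ ≤ ‖f‖) :=
  krylov_solution_minimal_norm_general A hker g f₀ hf₀mem hf₀sol
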